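/- For each t ∈ {0,1,…,T} and each x ∈ ℕ, the single-system value function Ṽ_t(x,k) is non-decreasing in the cumulative observed deterioration k: if k ≤ k' then Ṽ_t(x,k) ≤ Ṽ_t(x,k'). -/

import Mathlib

/-!
Backward induction on `t`: every `V t` is nonnegative, bounded, and monotone in `(x, k)`
jointly. The inductive step is stochastic dominance of the negative binomial in its shape:
`NB(r + s, p)` is the convolution of `NB(r, p)` and `NB(s, p)` (Chu–Vandermonde for
`Ring.multichoose`), so it is the law of an `NB(r, p)` draw plus an independent nonnegative
increment, and a monotone function can only gain in expectation. Raising `k` raises both shapes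
`α0 + k` and `(N - 1)(α0 + k)`, and the next state `(x + Z, k + Z + K)` is monotone in `(Z, K)`;
that is why monotonicity in `x` has to be carried along. Boundedness keeps every series summable,
since `NB(r, p)` has total mass `1` for each real `r ≥ 0` by the binomial series.
-/

open Filter

/-- Negative Binomial pmf with real shape `r` and success probability `p`:
`NB(r,p)(z) = Γ(z+r)/(Γ(r)·z!)·p^r·(1−p)^z` for `r > 0`, and `NB(0,p)` is
the point mass at `0`. -/
noncomputable def NB (r p : ℝ) (z : ℕ) : ℝ :=
  if r = 0 then (if z = 0 then (1 : ℝ) else 0)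
  else Real.Gamma ((z : ℝ) + r) / (Real.Gamma r * (Nat.factorial z : ℝ)) * p ^ r * (1 - p) ^ z

/-- `p_t = (β0 + N·t)/(β0 + N·t + 1)`. -/
noncomputable def pt (β0 : ℝ) (N t : ℕ) : ℝ :=
  (β0 + (N : ℝ) * (t : ℝ)) / (β0 + (N : ℝ) * (t : ℝ) + 1)

/-- Expectation `E_{(Z,K)}[f(Z,K)]` with `Z ~ NB(α0+k, p_t)` and
`K ~ NB((N−1)(α0+k), p_t)` independent. -/
noncomputable def EZK (α0 β0 : ℝ) (N t k : ℕ) (f : ℕ → ℕ → ℝ) : ℝ :=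
  ∑' z : ℕ, ∑' κ : ℕ,
    NB (α0 + (k : ℝ)) (pt β0 N t) z * NB (((N : ℝ) - 1) * (α0 + (k : ℝ))) (pt β0 N t) κ * f z κ

open Finset Function Polynomial

theorem Ring.multichoose_add {R : Type*} [CommRing R] [BinomialRing R] (r s : R) (n : ℕ) :
    multichoose (r + s) n = ∑ ij ∈ antidiagonal n, multichoose r ij.1 * multichoose s ij.2 := by
  have h := add_choose_eq n (Commute.all (-r) (-s))
  rw [← neg_add, choose_neg'] at h
  rw [← smul_left_cancel_iff (Int.negOnePow n), h, smul_sum]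
  refine sum_congr rfl fun ij hij => ?_
  rw [choose_neg', choose_neg', smul_mul_smul_comm, ← Int.negOnePow_add, ← Nat.cast_add,
    mem_antidiagonal.mp hij]

namespace Real

theorem Gamma_natCast_add {r : ℝ} (hr : 0 < r) (n : ℕ) :
    Gamma (n + r) = (ascPochhammer ℝ n).eval r * Gamma r := by
  induction n with
  | zero => simp
  | succ n ih =>
    rw [Nat.cast_succ, add_right_comm, Gamma_add_one (by positivity), ih, ascPochhammer_succ_eval]
    ring

theorem multichoose_eq_ascPochhammer_div (r : ℝ) (n : ℕ) :
    Ring.multichoose r n = (ascPochhammer ℝ n).eval r / n.factorial := by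
  rw [eq_div_iff (by positivity), mul_comm, ← nsmul_eq_mul,
    Ring.factorial_nsmul_multichoose_eq_ascPochhammer, ascPochhammer_smeval_eq_eval]

theorem multichoose_nonneg {r : ℝ} (hr : 0 ≤ r) (n : ℕ) : 0 ≤ Ring.multichoose r n := by
  rw [multichoose_eq_ascPochhammer_div]
  refine div_nonneg ?_ (Nat.cast_nonneg _)
  induction n with
  | zero => simp
  | succ n ih => rw [ascPochhammer_succ_eval]; positivity

end Real

theorem NB_eq_multichoose {r : ℝ} (hr : 0 ≤ r) (p : ℝ) (z : ℕ) :
    NB r p z = Ring.multichoose r z * p ^ r * (1 - p) ^ z := by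
  rcases hr.eq_or_lt with rfl | hr
  · cases z <;> simp [NB, Ring.multichoose_zero_succ]
  · rw [NB, if_neg hr.ne', Real.Gamma_natCast_add hr, Real.multichoose_eq_ascPochhammer_div]
    field_simp [(Real.Gamma_pos_of_pos hr).ne']

theorem NB_nonneg {r p : ℝ} (hr : 0 ≤ r) (hp : 0 ≤ p) (hp1 : p ≤ 1) (z : ℕ) : 0 ≤ NB r p z := by
  rw [NB_eq_multichoose hr]
  have := Real.multichoose_nonneg hr z
  have : 0 ≤ 1 - p := sub_nonneg.2 hp1
  positivity

theorem hasSum_NB {r p : ℝ} (hr : 0 ≤ r) (hp : 0 < p) (hp1 : p ≤ 1) : HasSum (NB r p) 1 := by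
  have hq : 1 - p ∈ Metric.eball (0 : ℝ) 1 := by
    have : |1 - p| < 1 := abs_lt.2 ⟨by linarith, by linarith⟩
    simpa [enorm_eq_nnnorm, ← NNReal.coe_lt_one] using this
  have h := ((Real.one_div_one_sub_rpow_hasFPowerSeriesOnBall_zero r).hasSum hq).mul_left (p ^ r)
  simp only [FormalMultilinearSeries.ofScalars_apply_eq, smul_eq_mul, zero_add, sub_sub_cancel] at h
  rw [mul_one_div_cancel (Real.rpow_pos_of_pos hp r).ne'] at h
  have hNB : NB r p = fun z : ℕ => p ^ r * (Ring.choose (r + z - 1) z * (1 - p) ^ z) := by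
    funext z
    rw [NB_eq_multichoose hr, Ring.multichoose_eq]
    ring
  rwa [hNB]

theorem NB_add {r s p : ℝ} (hr : 0 ≤ r) (hs : 0 ≤ s) (hp : 0 ≤ p) (n : ℕ) :
    NB (r + s) p n = ∑ ij ∈ antidiagonal n, NB r p ij.1 * NB s p ij.2 := by
  rw [NB_eq_multichoose (add_nonneg hr hs), Ring.multichoose_add, sum_mul, sum_mul]
  refine sum_congr rfl fun ij hij => ?_
  rw [NB_eq_multichoose hr, NB_eq_multichoose hs, Real.rpow_add_of_nonneg hp hr hs,
    ← mem_antidiagonal.mp hij, pow_add]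
  ring

theorem Summable.tsum_prod_eq_tsum_sum_antidiagonal {A α : Type*} [AddCommMonoid A]
    [HasAntidiagonal A] [AddCommMonoid α] [TopologicalSpace α] [ContinuousAdd α] [T3Space α]
    {F : A × A → α} (hF : Summable F) :
    ∑' x, F x = ∑' n, ∑ ij ∈ antidiagonal n, F ij := by
  conv_rhs => congr; ext; rw [← sum_finset_coe, ← tsum_fintype (L := .unconditional _)]
  rw [← HasAntidiagonal.sigmaAntidiagonalEquivProd.tsum_eq F]
  exact Summable.tsum_sigma' (fun n => (hasSum_fintype _).summable)
    (HasAntidiagonal.sigmaAntidiagonalEquivProd.summable_iff.mpr hF)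

theorem tsum_mul_le_tsum_sum_antidiagonal_mul {u v h : ℕ → ℝ} {M : ℝ} (hu : 0 ≤ u) (hv : 0 ≤ v)
    (hus : Summable u) (hv1 : HasSum v 1) (hh : Monotone h) (h0 : 0 ≤ h) (hM : ∀ n, h n ≤ M) :
    ∑' i, u i * h i ≤ ∑' n, (∑ ij ∈ antidiagonal n, u ij.1 * v ij.2) * h n := by
  have huv : Summable fun ij : ℕ × ℕ => u ij.1 * v ij.2 :=
    hus.mul_of_nonneg hv1.summable hu hv
  have hsum : ∀ g : ℕ × ℕ → ℕ, Summable fun ij => u ij.1 * v ij.2 * h (g ij) := fun g =>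
    .of_nonneg_of_le (fun ij => mul_nonneg (mul_nonneg (hu _) (hv _)) (h0 _))
      (fun ij => mul_le_mul_of_nonneg_left (hM _) (mul_nonneg (hu _) (hv _))) (huv.mul_right M)
  have huh : Summable fun i => u i * h i :=
    .of_nonneg_of_le (fun i => mul_nonneg (hu i) (h0 i))
      (fun i => mul_le_mul_of_nonneg_left (hM i) (hu i)) (hus.mul_right M)
  calc ∑' i, u i * h i = (∑' i, u i * h i) * ∑' j, v j := by rw [hv1.tsum_eq, mul_one]
    _ = ∑' ij : ℕ × ℕ, u ij.1 * v ij.2 * h ij.1 := by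
      simp_rw [huh.tsum_mul_tsum hv1.summable ((hsum Prod.fst).congr fun _ => by ring),
        mul_right_comm]
    _ ≤ ∑' ij : ℕ × ℕ, u ij.1 * v ij.2 * h (ij.1 + ij.2) :=
      (hsum _).tsum_le_tsum (fun ij => mul_le_mul_of_nonneg_left (hh le_self_add)
        (mul_nonneg (hu _) (hv _))) (hsum _)
    _ = ∑' n, (∑ ij ∈ antidiagonal n, u ij.1 * v ij.2) * h n := by
      rw [(hsum _).tsum_prod_eq_tsum_sum_antidiagonal]
      refine tsum_congr fun n => ?_
      rw [sum_mul]
      exact sum_congr rfl fun ij hij => by rw [mem_antidiagonal.mp hij]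

noncomputable def nbExpect (r p : ℝ) (f : ℕ → ℝ) : ℝ := ∑' z, NB r p z * f z

section nbExpect

variable {r s p M : ℝ} {f g : ℕ → ℝ}

theorem summable_NB_mul (hr : 0 ≤ r) (hp : 0 < p) (hp1 : p ≤ 1) (hf0 : 0 ≤ f)
    (hfM : ∀ z, f z ≤ M) : Summable fun z => NB r p z * f z :=
  .of_nonneg_of_le (fun z => mul_nonneg (NB_nonneg hr hp.le hp1 z) (hf0 z))
    (fun z => mul_le_mul_of_nonneg_left (hfM z) (NB_nonneg hr hp.le hp1 z))
    ((hasSum_NB hr hp hp1).summable.mul_right M)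

theorem nbExpect_nonneg (hr : 0 ≤ r) (hp : 0 ≤ p) (hp1 : p ≤ 1) (hf0 : 0 ≤ f) :
    0 ≤ nbExpect r p f :=
  tsum_nonneg fun z => mul_nonneg (NB_nonneg hr hp hp1 z) (hf0 z)

theorem nbExpect_mono (hr : 0 ≤ r) (hp : 0 < p) (hp1 : p ≤ 1) (hf0 : 0 ≤ f) (hfg : f ≤ g)
    (hgM : ∀ z, g z ≤ M) : nbExpect r p f ≤ nbExpect r p g :=
  (summable_NB_mul hr hp hp1 hf0 fun z => (hfg z).trans (hgM z)).tsum_le_tsum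
    (fun z => mul_le_mul_of_nonneg_left (hfg z) (NB_nonneg hr hp.le hp1 z))
    (summable_NB_mul hr hp hp1 (hf0.trans hfg) hgM)

theorem nbExpect_le (hr : 0 ≤ r) (hp : 0 < p) (hp1 : p ≤ 1) (hf0 : 0 ≤ f) (hfM : ∀ z, f z ≤ M) :
    nbExpect r p f ≤ M := by
  calc nbExpect r p f ≤ nbExpect r p fun _ => M := nbExpect_mono hr hp hp1 hf0 hfM fun _ => le_rfl
    _ = M := by rw [nbExpect, tsum_mul_right, (hasSum_NB hr hp hp1).tsum_eq, one_mul]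

theorem nbExpect_mono_shape (hr : 0 ≤ r) (hrs : r ≤ s) (hp : 0 < p) (hp1 : p ≤ 1)
    (hf : Monotone f) (hf0 : 0 ≤ f) (hfM : ∀ z, f z ≤ M) :
    nbExpect r p f ≤ nbExpect s p f := by
  have hsr : 0 ≤ s - r := sub_nonneg.2 hrs
  have h := tsum_mul_le_tsum_sum_antidiagonal_mul (fun z => NB_nonneg hr hp.le hp1 z)
    (fun z => NB_nonneg hsr hp.le hp1 z) (hasSum_NB hr hp hp1).summable (hasSum_NB hsr hp hp1)
    hf hf0 hfM
  simp_rw [← NB_add hr hsr hp.le, add_sub_cancel] at h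
  exact h

end nbExpect

theorem nbExpect_nbExpect_mono {a a' b b' p M : ℝ} {f g : ℕ → ℕ → ℝ} (ha : 0 ≤ a) (haa' : a ≤ a')
    (hb : 0 ≤ b) (hbb' : b ≤ b') (hp : 0 < p) (hp1 : p ≤ 1) (hf0 : ∀ z κ, 0 ≤ f z κ)
    (hfg : ∀ z κ, f z κ ≤ g z κ) (hg : Monotone (uncurry g)) (hgM : ∀ z κ, g z κ ≤ M) :
    nbExpect a p (fun z => nbExpect b p (f z)) ≤ nbExpect a' p (fun z => nbExpect b' p (g z)) := by
  have hb' := hb.trans hbb'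
  have hg0 z κ := (hf0 z κ).trans (hfg z κ)
  have hinner {c} (hc : 0 ≤ c) z : nbExpect c p (g z) ∈ Set.Icc 0 M :=
    ⟨nbExpect_nonneg hc hp.le hp1 (hg0 z), nbExpect_le hc hp hp1 (hg0 z) (hgM z)⟩
  calc nbExpect a p (fun z => nbExpect b p (f z))
      ≤ nbExpect a p (fun z => nbExpect b p (g z)) :=
        nbExpect_mono ha hp hp1 (fun z => nbExpect_nonneg hb hp.le hp1 (hf0 z))
          (fun z => nbExpect_mono hb hp hp1 (hf0 z) (hfg z) (hgM z)) fun z => (hinner hb z).2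
    _ ≤ nbExpect a p (fun z => nbExpect b' p (g z)) :=
        nbExpect_mono ha hp hp1 (fun z => (hinner hb z).1)
          (fun z => nbExpect_mono_shape hb hbb' hp hp1
            (fun _ _ h => hg (Prod.mk_le_mk.2 ⟨le_rfl, h⟩)) (hg0 z) (hgM z))
          fun z => (hinner hb' z).2
    _ ≤ nbExpect a' p (fun z => nbExpect b' p (g z)) :=
        nbExpect_mono_shape ha haa' hp hp1
          (fun _ _ h => nbExpect_mono hb' hp hp1 (hg0 _)
            (fun κ => hg (Prod.mk_le_mk.2 ⟨h, le_rfl⟩)) (hgM _))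
          (fun z => (hinner hb' z).1) fun z => (hinner hb' z).2

theorem pt_pos {β0 : ℝ} (hβ0 : 0 < β0) (N t : ℕ) : 0 < pt β0 N t := by
  unfold pt; positivity

theorem pt_le_one {β0 : ℝ} (hβ0 : 0 ≤ β0) (N t : ℕ) : pt β0 N t ≤ 1 := by
  unfold pt
  rw [div_le_one (by positivity)]
  linarith

theorem EZK_eq_nbExpect (α0 β0 : ℝ) (N t k : ℕ) (f : ℕ → ℕ → ℝ) :
    EZK α0 β0 N t k f = nbExpect (α0 + k) (pt β0 N t)
      fun z => nbExpect ((N - 1) * (α0 + k)) (pt β0 N t) (f z) := by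
  simp_rw [EZK, nbExpect, mul_assoc, tsum_mul_left]

noncomputable def expectNext (α0 β0 : ℝ) (N t : ℕ) (W : ℕ → ℕ → ℝ) (x k : ℕ) : ℝ :=
  EZK α0 β0 N t k fun z κ => W (x + z) (k + z + κ)

section expectNext

variable {α0 β0 M : ℝ} {N : ℕ} (t : ℕ) {W : ℕ → ℕ → ℝ}

theorem expectNext_mem_Icc (hα0 : 0 ≤ α0) (hβ0 : 0 < β0) (hN : 1 ≤ N)
    (hW : ∀ x k, W x k ∈ Set.Icc 0 M) (x k : ℕ) :
    expectNext α0 β0 N t W x k ∈ Set.Icc 0 M := by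
  have hp := pt_pos hβ0 N t
  have hp1 := pt_le_one hβ0.le N t
  have ha : (0 : ℝ) ≤ α0 + k := by positivity
  have hb : (0 : ℝ) ≤ (N - 1) * (α0 + k) := mul_nonneg (sub_nonneg.2 (by exact_mod_cast hN)) ha
  rw [expectNext, EZK_eq_nbExpect]
  exact ⟨nbExpect_nonneg ha hp.le hp1 fun _ => nbExpect_nonneg hb hp.le hp1 fun _ => (hW _ _).1,
    nbExpect_le ha hp hp1 (fun _ => nbExpect_nonneg hb hp.le hp1 fun _ => (hW _ _).1)
      fun _ => nbExpect_le hb hp hp1 (fun _ => (hW _ _).1) fun _ => (hW _ _).2⟩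

theorem monotone_expectNext (hα0 : 0 ≤ α0) (hβ0 : 0 < β0) (hN : 1 ≤ N)
    (hW : Monotone (uncurry W)) (hWM : ∀ x k, W x k ∈ Set.Icc 0 M) :
    Monotone (uncurry (expectNext α0 β0 N t W)) := by
  rintro ⟨x, k⟩ ⟨x', k'⟩ ⟨hx, hk⟩
  have hk' : (k : ℝ) ≤ k' := by exact_mod_cast hk
  have ha : (0 : ℝ) ≤ α0 + k := by positivity
  have hN1 : (0 : ℝ) ≤ N - 1 := sub_nonneg.2 (by exact_mod_cast hN)
  have hW₂ {y y' l l' : ℕ} (hy : y ≤ y') (hl : l ≤ l') : W y l ≤ W y' l' :=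
    hW (Prod.mk_le_mk.2 ⟨hy, hl⟩)
  simp only [uncurry_apply_pair, expectNext, EZK_eq_nbExpect]
  exact nbExpect_nbExpect_mono ha (by linarith) (mul_nonneg hN1 ha)
    (mul_le_mul_of_nonneg_left (by linarith) hN1) (pt_pos hβ0 N t) (pt_le_one hβ0.le N t)
    (fun _ _ => (hWM _ _).1) (fun _ _ => hW₂ (by omega) (by omega))
    (fun _ _ ⟨hz, hκ⟩ => hW₂ (by omega) (by omega)) fun _ _ => (hWM _ _).2

end expectNext

theorem bellman_monotone_and_mem_Icc {ξ : ℕ} {cp cu M : ℝ} (hcp : 0 ≤ cp) (hcpcu : cp ≤ cu)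
    {E U : ℕ → ℕ → ℝ}
    (hE : Monotone (uncurry E)) (hEM : ∀ x k, E x k ∈ Set.Icc 0 M)
    (hfail : ∀ x k, ξ ≤ x → U x k = cu + E 0 k)
    (hop : ∀ x k, x < ξ → U x k = min (cp + E 0 k) (E x k)) :
    Monotone (uncurry U) ∧ ∀ x k, U x k ∈ Set.Icc 0 (cu + M) := by
  have hE₂ {y y' l l' : ℕ} (hy : y ≤ y') (hl : l ≤ l') : E y l ≤ E y' l' :=
    hE (Prod.mk_le_mk.2 ⟨hy, hl⟩)
  refine ⟨fun ⟨x, k⟩ ⟨x', k'⟩ ⟨hx, hk⟩ => ?_, fun x k => ?_⟩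
  · have h0 : E 0 k ≤ E 0 k' := hE₂ le_rfl hk
    simp only [uncurry_apply_pair]
    rcases le_or_gt ξ x with hξx | hxξ
    · rw [hfail x k hξx, hfail x' k' (hξx.trans hx)]
      linarith
    rcases le_or_gt ξ x' with hξx' | hx'ξ
    · rw [hop x k hxξ, hfail x' k' hξx']
      exact (min_le_left _ _).trans (by linarith)
    · rw [hop x k hxξ, hop x' k' hx'ξ]
      exact min_le_min (by linarith) (hE₂ hx hk)
  · obtain ⟨h0, hM⟩ := hEM 0 k
    obtain ⟨hx0, -⟩ := hEM x k
    rcases le_or_gt ξ x with hξx | hxξ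
    · rw [hfail x k hξx]
      constructor <;> linarith
    · rw [hop x k hxξ]
      exact ⟨le_min (by linarith) hx0, (min_le_left _ _).trans (by linarith)⟩

theorem value_monotone_k_general
    (α0 β0 : ℝ) (hα0 : 0 < α0) (hβ0 : 0 < β0)
    (N T : ℕ) (hN : 1 ≤ N)
    (ξ : ℕ)
    (cp cu : ℝ) (hcp : 0 < cp) (hcpcu : cp < cu)
    (V : ℕ → ℕ → ℕ → ℝ)
    (hVT : ∀ x k, V T x k = if ξ ≤ x then cu else 0)
    (hVfail : ∀ t, t < T → ∀ x k, ξ ≤ x →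
      V t x k = cu + EZK α0 β0 N t k (fun z κ => V (t + 1) z (k + z + κ)))
    (hVop : ∀ t, t < T → ∀ x k, x < ξ →
      V t x k =
        min (cp + EZK α0 β0 N t k (fun z κ => V (t + 1) z (k + z + κ)))
          (EZK α0 β0 N t k (fun z κ => V (t + 1) (x + z) (k + z + κ)))) :
    ∀ t ≤ T, ∀ (x : ℕ) (k k' : ℕ), k ≤ k' → V t x k ≤ V t x k' := by
  have hcu : 0 ≤ cu := (hcp.trans hcpcu).le
  have key : ∀ t ≤ T, Monotone (uncurry (V t)) ∧ ∃ M, ∀ x k, V t x k ∈ Set.Icc 0 M := by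
    intro t ht
    induction ht using Nat.decreasingInduction with
    | self =>
      refine ⟨fun ⟨x, k⟩ ⟨x', k'⟩ ⟨hx, _⟩ => ?_, cu, fun x k => ?_⟩
      · simp only [uncurry_apply_pair, hVT]
        split_ifs <;> first | exact le_rfl | exact hcu | omega
      · rw [hVT]
        split_ifs <;> simp [hcu]
    | of_succ t htT ih =>
      obtain ⟨hV, M, hVM⟩ := ih
      obtain ⟨hU, hUM⟩ := bellman_monotone_and_mem_Icc (ξ := ξ) (U := V t) hcp.le hcpcu.le
        (monotone_expectNext t hα0.le hβ0 hN hV hVM)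
        (expectNext_mem_Icc t hα0.le hβ0 hN hVM)
        (fun x k hx => by simp only [hVfail t htT x k hx, expectNext, zero_add])
        (fun x k hx => by simp only [hVop t htT x k hx, expectNext, zero_add])
      exact ⟨hU, _, hUM⟩
  intro t ht x k k' hk
  exact (key t ht).1 (Prod.mk_le_mk.2 ⟨le_rfl, hk⟩)

/-- The single-system value function is non-decreasing in the pooled data `k`. -/
theorem value_monotone_k
    (α0 β0 : ℝ) (hα0 : 0 < α0) (hβ0 : 0 < β0)
    (N T : ℕ) (hN : 1 ≤ N) (hT : 1 ≤ T)
    (ξ : ℕ) (hξ : 1 ≤ ξ)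
    (cp cu : ℝ) (hcp : 0 < cp) (hcpcu : cp < cu)
    (V : ℕ → ℕ → ℕ → ℝ)
    (hVT : ∀ x k, V T x k = if ξ ≤ x then cu else 0)
    (hVfail : ∀ t, t < T → ∀ x k, ξ ≤ x →
      V t x k = cu + EZK α0 β0 N t k (fun z κ => V (t + 1) z (k + z + κ)))
    (hVop : ∀ t, t < T → ∀ x k, x < ξ →
      V t x k =
        min (cp + EZK α0 β0 N t k (fun z κ => V (t + 1) z (k + z + κ)))
          (EZK α0 β0 N t k (fun z κ => V (t + 1) (x + z) (k + z + κ)))) :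
    ∀ t ≤ T, ∀ (x : ℕ) (k k' : ℕ), k ≤ k' → V t x k ≤ V t x k' :=
  value_monotone_k_general α0 β0 hα0 hβ0 N T hN ξ cp cu hcp hcpcu V hVT hVfail hVop
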